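/- On the eigenspace decomposition, the Casimir operator C_δ = R_0 + 2(1+n(δ-1)-E')E' - n²δ(δ-1) acts on P_{k,s} = R^s Q (Q harmonic of degree k-2s in ξ) with eigenvalue γ_{k,s} = 2s(n+2(k-s-1)) + 2k(1+n(δ-1)-k) - n²δ(δ-1). -/
import Mathlib


noncomputable section
open MvPolynomial

/-- The polynomial algebra ℂ[x^1,…,x^n, ξ_1,…,ξ_n] on T*ℝ^n:
`Sum.inl i ↦ x^i`, `Sum.inr i ↦ ξ_i`. -/
abbrev PA (n : ℕ) := MvPolynomial (Fin n ⊕ Fin n) ℂ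

/-- The variable x^i. -/
def xv (n : ℕ) (i : Fin n) : PA n := X (Sum.inl i)
/-- The variable ξ_i. -/
def ξv (n : ℕ) (i : Fin n) : PA n := X (Sum.inr i)
/-- ∂/∂x^i. -/
def ddx (n : ℕ) (i : Fin n) : Module.End ℂ (PA n) := (pderiv (Sum.inl i)).toLinearMap
/-- ∂/∂ξ_i. -/
def ddξ (n : ℕ) (i : Fin n) : Module.End ℂ (PA n) := (pderiv (Sum.inr i)).toLinearMap
/-- Multiplication operator by a polynomial. -/
def mulOp (n : ℕ) (p : PA n) : Module.End ℂ (PA n) := LinearMap.mulLeft ℂ p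

/- The flat (pseudo-Euclidean) metric is taken diagonal in adapted coordinates:
`g^{ii} = g_{ii} = ε i = ±1`; indices are raised/lowered by `ε`. -/

/-- R = g^{ij} ξ_i ξ_j = ξ^i ξ_i (multiplication operator). -/
def Rop (n : ℕ) (ε : Fin n → ℂ) : Module.End ℂ (PA n) :=
  mulOp n (∑ i, C (ε i) * ξv n i * ξv n i)
/-- T = g^{ij} ∂_{ξ_i} ∂_{ξ_j} = ∂_{ξ^i}∂_{ξ_i} (trace operator). -/
def TrOp (n : ℕ) (ε : Fin n → ℂ) : Module.End ℂ (PA n) :=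
  ∑ i, ε i • (ddξ n i * ddξ n i)
/-- The Euler operator E' = Σ ξ_i ∂_{ξ_i}. -/
def Eul (n : ℕ) : Module.End ℂ (PA n) := ∑ i, mulOp n (ξv n i) * ddξ n i
/-- E = Σ ξ_i ∂_{ξ_i} + n/2. -/
def Eop (n : ℕ) : Module.End ℂ (PA n) := Eul n + ((n : ℂ)/2) • 1
/-- G = ξ^i ∂_{x^i} = g^{ij} ξ_i ∂_{x^j}. -/
def Gop (n : ℕ) (ε : Fin n → ℂ) : Module.End ℂ (PA n) :=
  ∑ i, ε i • (mulOp n (ξv n i) * ddx n i)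
/-- D = Σ ∂_{ξ_i} ∂_{x^i} (divergence operator). -/
def Dop (n : ℕ) : Module.End ℂ (PA n) := ∑ i, ddξ n i * ddx n i
/-- Δ = ∂_{x^i}∂_{x_i} = g^{ij} ∂_{x^i} ∂_{x^j} (Laplacian). -/
def Lap (n : ℕ) (ε : Fin n → ℂ) : Module.End ℂ (PA n) :=
  ∑ i, ε i • (ddx n i * ddx n i)
/-- R₀ = R T. -/
def R0 (n : ℕ) (ε : Fin n → ℂ) : Module.End ℂ (PA n) := Rop n ε * TrOp n ε
/-- G₀ = G T. -/
def G0 (n : ℕ) (ε : Fin n → ℂ) : Module.End ℂ (PA n) := Gop n ε * TrOp n ε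
/-- The generator of inversions L^δ_{X̄_i} =
x_jx^j ∂_{x^i} - 2 x_i x^j ∂_{x^j} - 2(ξ_i x_j - ξ_j x_i) g^{jk} ∂_{ξ_k}
+ 2 ξ_j x^j g^{ik} ∂_{ξ_k} - 2nδ x_i. -/
def Linv (n : ℕ) (ε : Fin n → ℂ) (δ : ℂ) (i : Fin n) : Module.End ℂ (PA n) :=
  mulOp n (∑ j, C (ε j) * xv n j * xv n j) * ddx n i
  - (2:ℂ) • (ε i • (mulOp n (xv n i) * ∑ j, mulOp n (xv n j) * ddx n j))
  - (2:ℂ) • (∑ j, ε j • (mulOp n (ξv n i * C (ε j) * xv n j - ξv n j * C (ε i) * xv n i) * ddξ n j))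
  + (2:ℂ) • (ε i • (mulOp n (∑ j, ξv n j * xv n j) * ddξ n i))
  - (2 * (n:ℂ) * δ * ε i) • mulOp n (xv n i)

/-- The Casimir operator C_δ = R₀ + 2(1+n(δ-1)-E')E' - n²δ(δ-1). -/
def Cas (n : ℕ) (ε : Fin n → ℂ) (δ : ℂ) : Module.End ℂ (PA n) :=
  R0 n ε
    + (2:ℂ) • ((((1:ℂ) + (n:ℂ) * (δ - 1)) • (1 : Module.End ℂ (PA n)) - Eul n) * Eul n)
    - ((n:ℂ)^2 * δ * (δ - 1)) • 1

section Aux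
variable (n : ℕ) (ε : Fin n → ℂ)

def RPoly : PA n := ∑ i, C (ε i) * ξv n i * ξv n i

lemma pderiv_RPoly (j : Fin n) :
    pderiv (Sum.inr j) (RPoly n ε) = C (2 * ε j) * ξv n j := by
  rw [RPoly, map_sum, Finset.sum_eq_single j]
  · simp [ξv, C_mul, map_ofNat]; ring
  · intro i _ hij
    simp [ξv, pderiv_X_of_ne (fun h => hij (Sum.inr.inj h))]
  · simp

lemma eul_apply (p : PA n) : Eul n p = ∑ i, ξv n i * pderiv (Sum.inr i) p := by
  simp [Eul, mulOp, ddξ, LinearMap.sum_apply, Module.End.mul_apply]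

lemma tr_apply (p : PA n) :
    TrOp n ε p = ∑ i, C (ε i) * pderiv (Sum.inr i) (pderiv (Sum.inr i) p) := by
  simp [TrOp, ddξ, LinearMap.sum_apply, Module.End.mul_apply, smul_eq_C_mul]

end Aux

section Aux2
variable (n : ℕ) (ε : Fin n → ℂ)

lemma eul_RP_mul (p : PA n) :
    Eul n (RPoly n ε * p) = 2 * RPoly n ε * p + RPoly n ε * Eul n p := by
  calc Eul n (RPoly n ε * p)
      = ∑ i, (2 * (C (ε i) * ξv n i * ξv n i) * p
          + RPoly n ε * (ξv n i * pderiv (Sum.inr i) p)) := by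
        rw [eul_apply]
        exact Finset.sum_congr rfl fun i _ => by
          rw [pderiv_mul, pderiv_RPoly, C_mul, map_ofNat]; ring
    _ = 2 * RPoly n ε * p + RPoly n ε * Eul n p := by
        rw [Finset.sum_add_distrib, ← Finset.mul_sum, ← eul_apply, ← Finset.sum_mul,
          ← Finset.mul_sum, ← RPoly]

lemma tr_RP_mul (hε2 : ∀ i, ε i * ε i = 1) (p : PA n) :
    TrOp n ε (RPoly n ε * p)
      = 2 * (n : ℂ) • p + 4 * Eul n p + RPoly n ε * TrOp n ε p := by
  calc TrOp n ε (RPoly n ε * p)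
      = ∑ i, (2 * p + 4 * (ξv n i * pderiv (Sum.inr i) p)
          + RPoly n ε * (C (ε i) * pderiv (Sum.inr i) (pderiv (Sum.inr i) p))) := by
        rw [tr_apply]
        refine Finset.sum_congr rfl fun i _ => ?_
        have h1 : (C (ε i) : PA n) * C (ε i) = 1 := by
          rw [← C_mul, hε2 i, C_1]
        have hstep : pderiv (Sum.inr i) (pderiv (Sum.inr i) (RPoly n ε * p))
            = C (ε i) * 2 * p + C (ε i) * 4 * (ξv n i * pderiv (Sum.inr i) p)
              + RPoly n ε * pderiv (Sum.inr i) (pderiv (Sum.inr i) p) := by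
          have h2 : pderiv (Sum.inr i) (2 : PA n) = 0 := by
            rw [← map_ofNat (C : ℂ →+* PA n) 2, pderiv_C]
          simp only [h2, pderiv_mul, map_add, pderiv_RPoly, pderiv_C, ξv, pderiv_X_self, C_mul, map_ofNat]
          ring
        rw [hstep]
        linear_combination (2 * p + 4 * (ξv n i * pderiv (Sum.inr i) p)) * h1
    _ = 2 * (n : ℂ) • p + 4 * Eul n p + RPoly n ε * TrOp n ε p := by
        rw [Finset.sum_add_distrib, Finset.sum_add_distrib]
        simp only [← Finset.mul_sum]
        rw [← eul_apply, ← tr_apply, Finset.sum_const, Finset.card_univ, Fintype.card_fin]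
        simp [nsmul_eq_mul, smul_eq_C_mul]
end Aux2

section Aux3
variable (n : ℕ) (ε : Fin n → ℂ)

lemma Rop_apply (p : PA n) : Rop n ε p = RPoly n ε * p := rfl

lemma eul_pow (d : ℂ) (Q : PA n) (hQ : Eul n Q = d • Q) :
    ∀ j : ℕ, Eul n ((Rop n ε ^ j) Q) = (d + 2 * j) • (Rop n ε ^ j) Q := by
  intro j; induction j with
  | zero => simpa using hQ
  | succ j ih =>
      rw [pow_succ', Module.End.mul_apply, Rop_apply, eul_RP_mul, ih]
      simp only [smul_eq_C_mul, C_add, C_mul, map_ofNat, Nat.cast_succ, C_1, C_0]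
      ring

lemma tr_pow (hε2 : ∀ i, ε i * ε i = 1) (d : ℂ) (Q : PA n)
    (hQ0 : TrOp n ε Q = 0) (hQ : Eul n Q = d • Q) :
    ∀ j : ℕ, TrOp n ε ((Rop n ε ^ (j + 1)) Q)
      = (2 * ((j : ℂ) + 1) * ((n : ℂ) + 2 * d + 2 * j)) • (Rop n ε ^ j) Q := by
  intro j; induction j with
  | zero =>
      rw [pow_one, Rop_apply, tr_RP_mul n ε hε2, hQ0, hQ]
      simp only [pow_zero, Module.End.one_apply, mul_zero, add_zero,
        smul_eq_C_mul, C_add, C_mul, map_ofNat, Nat.cast_zero, C_0, C_1]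
      ring
  | succ j ih =>
      rw [pow_succ', Module.End.mul_apply, Rop_apply, tr_RP_mul n ε hε2, ih,
        eul_pow n ε d Q hQ (j + 1)]
      simp only [pow_succ', Module.End.mul_apply, Rop_apply, smul_eq_C_mul, C_add, C_mul,
        map_ofNat, Nat.cast_succ, C_1, C_0]
      ring

end Aux3


/-- C_δ acts on P_{k,s} = R^s Q (Q harmonic of ξ-degree k-2s) with
eigenvalue γ_{k,s} = 2s(n+2(k-s-1)) + 2k(1+n(δ-1)-k) - n²δ(δ-1). -/
theorem stmt15 (n : ℕ) (hn : 1 ≤ n) (ε : Fin n → ℂ) (hε : ∀ i, ε i = 1 ∨ ε i = -1)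
    (δ : ℂ) (k s : ℕ) (hks : 2 * s ≤ k) (Q : PA n)
    (hharm : TrOp n ε Q = 0)
    (hhom : Eul n Q = ((k:ℂ) - 2 * s) • Q) :
    Cas n ε δ ((Rop n ε ^ s) Q)
      = (2 * (s:ℂ) * ((n:ℂ) + 2 * ((k:ℂ) - (s:ℂ) - 1))
          + 2 * (k:ℂ) * (1 + (n:ℂ) * (δ - 1) - (k:ℂ))
          - (n:ℂ)^2 * δ * (δ - 1)) • ((Rop n ε ^ s) Q) := by
  have hε2 : ∀ i, ε i * ε i = 1 := fun i => by rcases hε i with h | h <;> rw [h] <;> ring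
  set P : PA n := (Rop n ε ^ s) Q with hP
  have hEul : Eul n P = (k : ℂ) • P := by
    rw [hP, eul_pow n ε _ Q hhom s]
    congr 1; ring
  have hR0 : R0 n ε P = (2 * (s:ℂ) * ((n:ℂ) + 2 * ((k:ℂ) - (s:ℂ) - 1))) • P := by
    cases s with
    | zero =>
        simp only [R0, Module.End.mul_apply, hP, pow_zero, Module.End.one_apply, hharm,
          map_zero, Nat.cast_zero]
        norm_num
    | succ j =>
        rw [R0, Module.End.mul_apply, hP,
          tr_pow n ε hε2 _ Q hharm hhom j, map_smul, ← Module.End.mul_apply, ← pow_succ']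
        congr 1
        push_cast
        ring
  rw [Cas]
  simp only [LinearMap.add_apply, LinearMap.sub_apply, LinearMap.smul_apply,
    Module.End.mul_apply, Module.End.one_apply]
  rw [hR0, hEul, map_smul, hEul]
  simp only [map_smul, smul_sub, smul_smul, LinearMap.smul_apply, Module.End.one_apply,
    LinearMap.sub_apply]
  module
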